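/- arXiv:2411.17630 — 2 statements merged into one kernel-verified Lean document; each statement's English description precedes it below -/
import Mathlib

section
/- Let M, L ≥ 1, let w₁, …, w_M ∈ ℂ^L, and let P be a diagonal projector on ℂ^L. Form the augmented vector ψ = [Pw₁; …; Pw_M; (1−P)w₁; …; (1−P)w_M] ∈ ℂ^{2ML}, and let Õ_Σ := E₀₀ ⊗ J_M ⊗ I_L, where E₀₀ = [[1,0],[0,0]] = ½(I + Z) (2×2), J_M is the M×M all-ones matrix, and I_L is the L×L identity. Then ψᴴ Õ_Σ ψ = ‖Σ_{i=1}^M P w_i‖². -/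
open Matrix Kronecker

/-!
`E₀₀ = single false false 1` cuts the quadratic form of `E₀₀ ⊗ A` down to the `false` block of
`ψ`, which is `(P w₁, …, P w_M)`. On a block vector `(u₁, …, u_M)`, `J_M ⊗ I_L` replaces every
block by `∑ uᵢ`, so its quadratic form is `(∑ uᵢ)ᴴ (∑ uᵢ)`.
-/

section

variable {R ι κ m n : Type*} [Semiring R]

theorem dotProduct_single_kronecker_mulVec [Fintype ι] [Fintype κ] [DecidableEq ι]
    (i j : ι) (A : Matrix κ κ R) (x y : ι × κ → R) :
    x ⬝ᵥ (single i j 1 ⊗ₖ A) *ᵥ y = (fun k => x (i, k)) ⬝ᵥ A *ᵥ fun k => y (j, k) := by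
  simp [dotProduct, mulVec, Fintype.sum_prod_type, single_apply, ite_and]

theorem allOnes_kronecker_one_mulVec_uncurry [Fintype m] [Fintype n] [DecidableEq n]
    (y : m → n → R) :
    (of (fun _ _ => 1) ⊗ₖ (1 : Matrix n n R)) *ᵥ Function.uncurry y =
      Function.uncurry fun (_ : m) => ∑ i, y i := by
  ext ⟨i, l⟩
  simp [mulVec, dotProduct, Fintype.sum_prod_type, one_apply]

theorem uncurry_dotProduct_uncurry_const [Fintype m] [Fintype n] (x : m → n → R) (s : n → R) :
    Function.uncurry x ⬝ᵥ Function.uncurry (fun (_ : m) => s) = (∑ i, x i) ⬝ᵥ s := by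
  rw [sum_dotProduct]
  exact Fintype.sum_prod_type _

end

theorem augmented_multistate_observable_expectation_general
    (M L : ℕ)
    (w : Fin M → Fin L → ℂ) (d : Fin L → ℂ) :
    let P : Matrix (Fin L) (Fin L) ℂ := diagonal d
    let E00 : Matrix Bool Bool ℂ := Matrix.of fun i j => if i = false ∧ j = false then 1 else 0
    let J : Matrix (Fin M) (Fin M) ℂ := Matrix.of fun _ _ => 1
    let IL : Matrix (Fin L) (Fin L) ℂ := 1
    let ψ : Bool × Fin M × Fin L → ℂ := fun p =>
      if p.1 then ((1 - P).mulVec (w p.2.1)) p.2.2 else (P.mulVec (w p.2.1)) p.2.2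
    star ψ ⬝ᵥ (E00 ⊗ₖ (J ⊗ₖ IL)).mulVec ψ =
      star (∑ i, P.mulVec (w i)) ⬝ᵥ (∑ i, P.mulVec (w i)) := by
  intro P E00 J IL ψ
  have hE00 : E00 = single false false 1 := by
    ext i j
    simp [E00, single_apply, eq_comm]
  rw [hE00, dotProduct_single_kronecker_mulVec]
  change Function.uncurry (fun i => star (P *ᵥ w i)) ⬝ᵥ
      (J ⊗ₖ IL) *ᵥ Function.uncurry (fun i => P *ᵥ w i) = _
  rw [allOnes_kronecker_one_mulVec_uncurry, uncurry_dotProduct_uncurry_const, star_sum]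

/-- Correctness of the generalized multi-state observable: for sub-states
`w₁, …, w_M ∈ ℂ^L`, a diagonal projector `P`, the augmented vector
`ψ = [Pw₁; …; Pw_M; (1−P)w₁; …; (1−P)w_M]` and the observable
`Õ_Σ = E₀₀ ⊗ J_M ⊗ I_L` (with `E₀₀ = [[1,0],[0,0]] = ½(I+Z)`, `J_M` all-ones,
`I_L` the identity), one has `ψᴴ Õ_Σ ψ = ‖∑ i, P wᵢ‖²` (with `‖y‖² = yᴴy`). -/
theorem augmented_multistate_observable_expectation
    (M L : ℕ) (hM : 1 ≤ M) (hL : 1 ≤ L)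
    (w : Fin M → Fin L → ℂ) (d : Fin L → ℂ) (hd : ∀ i, d i = 0 ∨ d i = 1) :
    let P : Matrix (Fin L) (Fin L) ℂ := diagonal d
    let E00 : Matrix Bool Bool ℂ := Matrix.of fun i j => if i = false ∧ j = false then 1 else 0
    let J : Matrix (Fin M) (Fin M) ℂ := Matrix.of fun _ _ => 1
    let IL : Matrix (Fin L) (Fin L) ℂ := 1
    let ψ : Bool × Fin M × Fin L → ℂ := fun p =>
      if p.1 then ((1 - P).mulVec (w p.2.1)) p.2.2 else (P.mulVec (w p.2.1)) p.2.2
    star ψ ⬝ᵥ (E00 ⊗ₖ (J ⊗ₖ IL)).mulVec ψ =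
      star (∑ i, P.mulVec (w i)) ⬝ᵥ (∑ i, P.mulVec (w i)) :=
  augmented_multistate_observable_expectation_general M L w d
end

section
/- Let H be an n×n complex matrix, S ≥ 1, t : Fin S → ℝ, and τ ∈ ℝ. Let blockDiagonal denote the SN×SN block-diagonal matrix built from S blocks of size n×n. Then exp(−iτ · blockDiagonal(s ↦ H)) · exp(−i · blockDiagonal(s ↦ t(s)·H)) = blockDiagonal(s ↦ exp(−i(τ + t(s))·H)). In particular, evolving the stacked state [w₁; …; w_S] first under the synchronization Hamiltonian H^sync = blockDiagonal(s ↦ t(s)·H) and then under H^mult = blockDiagonal(s ↦ H) for time τ evolves the s-th sub-state by exp(−i(τ + t(s))H). -/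
/-!
The exponential of a block-diagonal matrix is block-diagonal with the exponentials of the blocks.
In each block both exponents are scalar multiples of `H`, so they commute and the two
exponentials merge into `exp (-i (τ + t s) H)`.
-/

open Matrix NormedSpace

namespace Matrix

variable {m n o 𝔸 : Type*}

section Exponential

variable [Fintype m] [DecidableEq m] [Fintype n] [DecidableEq n]

theorem exp_blockDiagonal_eq_blockDiagonal_exp [NormedRing 𝔸] [NormedAlgebra ℚ 𝔸]
    [CompleteSpace 𝔸] (v : m → Matrix n n 𝔸) :
    exp (blockDiagonal v) = blockDiagonal fun i => exp (v i) := by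
  rw [exp_blockDiagonal]
  -- `exp` does not depend on the norm; the operator norm is only there to apply `Pi.exp_def`.
  open scoped Norms.Operator in
  exact congrArg blockDiagonal
    (@Pi.exp_def _ _ _ _ _ (fun _ => (inferInstance : CompleteSpace (Matrix n n 𝔸))) v)

variable [NormedCommRing 𝔸] [NormedAlgebra ℚ 𝔸] [CompleteSpace 𝔸]

theorem exp_smul_mul_exp_smul (a b : 𝔸) (H : Matrix n n 𝔸) :
    exp (a • H) * exp (b • H) = exp ((a + b) • H) := by
  rw [add_smul, exp_add_of_commute]
  exact ((Commute.refl H).smul_left a).smul_right b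

theorem exp_blockDiagonal_smul_mul_exp_blockDiagonal_smul (a b : m → 𝔸) (H : Matrix n n 𝔸) :
    exp (blockDiagonal fun i => a i • H) * exp (blockDiagonal fun i => b i • H) =
      blockDiagonal fun i => exp ((a i + b i) • H) := by
  simp only [exp_blockDiagonal_eq_blockDiagonal_exp, ← blockDiagonal_mul, exp_smul_mul_exp_smul]

end Exponential

theorem blockDiagonal_mulVec_apply [Fintype n] [Fintype o] [DecidableEq o]
    [NonUnitalNonAssocSemiring 𝔸]
    (M : o → Matrix m n 𝔸) (w : o → n → 𝔸) (i : m) (s : o) :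
    (blockDiagonal M *ᵥ fun p : n × o => w p.2 p.1) (i, s) = (M s *ᵥ w s) i := by
  simp [mulVec, dotProduct, Fintype.sum_prod_type, blockDiagonal_apply, ite_mul]

end Matrix

theorem synchronization_block_diagonal_evolution_general
    (n S : ℕ) (H : Matrix (Fin n) (Fin n) ℂ) (t : Fin S → ℝ) (τ : ℝ) :
    (exp ((-(Complex.I * (τ : ℂ))) • blockDiagonal fun _ : Fin S => H) *
        exp ((-Complex.I) • blockDiagonal fun s : Fin S => (t s : ℂ) • H) =
      blockDiagonal fun s : Fin S => exp ((-(Complex.I * ((τ : ℂ) + (t s : ℂ)))) • H)) ∧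
    (∀ (w : Fin S → Fin n → ℂ) (s : Fin S) (i : Fin n),
      ((exp ((-(Complex.I * (τ : ℂ))) • blockDiagonal fun _ : Fin S => H) *
          exp ((-Complex.I) • blockDiagonal fun s : Fin S => (t s : ℂ) • H)).mulVec
        (fun p : Fin n × Fin S => w p.2 p.1)) (i, s) =
        (exp ((-(Complex.I * ((τ : ℂ) + (t s : ℂ)))) • H)).mulVec (w s) i) := by
  have evolution :
      exp ((-(Complex.I * (τ : ℂ))) • blockDiagonal fun _ : Fin S => H) *
          exp ((-Complex.I) • blockDiagonal fun s : Fin S => (t s : ℂ) • H) =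
        blockDiagonal fun s : Fin S => exp ((-(Complex.I * ((τ : ℂ) + (t s : ℂ)))) • H) := by
    rw [← blockDiagonal_smul, ← blockDiagonal_smul]
    simp only [Pi.smul_def, smul_smul, exp_blockDiagonal_smul_mul_exp_blockDiagonal_smul]
    refine congrArg blockDiagonal (funext fun s => ?_)
    congr 2
    ring
  exact ⟨evolution, fun w s i => by rw [evolution, blockDiagonal_mulVec_apply]⟩

/-- Correctness of the synchronization procedure for asynchronous sources:
`exp(−iτ·BD(s ↦ H)) · exp(−i·BD(s ↦ t(s)·H)) = BD(s ↦ exp(−i(τ+t(s))·H))`, so evolving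
the stacked state first under `H^sync = BD(s ↦ t(s)·H)` and then under
`H^mult = BD(s ↦ H)` for time `τ` evolves the `s`-th sub-state by `exp(−i(τ+t(s))H)`. -/
theorem synchronization_block_diagonal_evolution
    (n S : ℕ) (hS : 1 ≤ S) (H : Matrix (Fin n) (Fin n) ℂ) (t : Fin S → ℝ) (τ : ℝ) :
    (exp ((-(Complex.I * (τ : ℂ))) • blockDiagonal fun _ : Fin S => H) *
        exp ((-Complex.I) • blockDiagonal fun s : Fin S => (t s : ℂ) • H) =
      blockDiagonal fun s : Fin S => exp ((-(Complex.I * ((τ : ℂ) + (t s : ℂ)))) • H)) ∧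
    (∀ (w : Fin S → Fin n → ℂ) (s : Fin S) (i : Fin n),
      ((exp ((-(Complex.I * (τ : ℂ))) • blockDiagonal fun _ : Fin S => H) *
          exp ((-Complex.I) • blockDiagonal fun s : Fin S => (t s : ℂ) • H)).mulVec
        (fun p : Fin n × Fin S => w p.2 p.1)) (i, s) =
        (exp ((-(Complex.I * ((τ : ℂ) + (t s : ℂ)))) • H)).mulVec (w s) i) :=
  synchronization_block_diagonal_evolution_general n S H t τ
end
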